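/- arXiv:0804.1948 — 4 statements merged into one kernel-verified Lean document; each statement's English description precedes it below -/
import Mathlib

section
/- For a bounded operator A on h ⊗ H and vectors u, v ∈ h, the operator inequality 0 ≤ A(u,v)* A(u,v) ≤ ‖u‖² · (A*A)(v,v) holds in B(H). -/
/-!
By Cauchy–Schwarz, `‖A(u,v) ξ‖² = ⟪u ⊗ A(u,v) ξ, A (v ⊗ ξ)⟫ ≤ ‖u‖ ‖A(u,v) ξ‖ ‖A (v ⊗ ξ)‖`, so
`‖A(u,v) ξ‖ ≤ ‖u‖ ‖A (v ⊗ ξ)‖`, while `⟪(A*A)(v,v) ξ, ξ⟫ = ‖A (v ⊗ ξ)‖²`. Hence the quadratic form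
of `‖u‖² (A*A)(v,v) - A(u,v)* A(u,v)` is real and nonnegative, which on a complex Hilbert space
already makes the operator positive.
-/

open ContinuousLinearMap
open scoped ComplexOrder

local notation "⟪" x ", " y "⟫" => @inner ℂ _ _ x y

theorem ContinuousLinearMap.isPositive_iff_inner_nonneg_complex
    {E : Type*} [NormedAddCommGroup E] [InnerProductSpace ℂ E] (T : E →L[ℂ] E) :
    T.IsPositive ↔ ∀ x, 0 ≤ ⟪T x, x⟫ := by
  simp only [isPositive_iff_complex, Complex.nonneg_iff, Complex.ext_iff, Complex.ofReal_re,
    Complex.ofReal_im, RCLike.re_to_complex, true_and, eq_comm (a := (0 : ℝ)), and_comm]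

section TensorSlice

variable {h H HT : Type*}
  [NormedAddCommGroup H] [InnerProductSpace ℂ H]
  [NormedAddCommGroup HT] [InnerProductSpace ℂ HT]
  {tmul : h → H → HT}

theorem inner_slice_adjoint_comp_self_apply_self [CompleteSpace HT] {A : HT →L[ℂ] HT} {v : h}
    {C : H → H} (hC : ∀ ξ₁ ξ₂, ⟪ξ₁, C ξ₂⟫ = ⟪tmul v ξ₁, (adjoint A ∘L A) (tmul v ξ₂)⟫) (ξ : H) :
    ⟪C ξ, ξ⟫ = (‖A (tmul v ξ)‖ : ℂ) ^ 2 := by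
  rw [← inner_conj_symm, hC, comp_apply, adjoint_inner_right, inner_self_eq_norm_sq_to_K,
    RCLike.ofReal_eq_complex_ofReal, map_pow, Complex.conj_ofReal]

variable [NormedAddCommGroup h] [InnerProductSpace ℂ h]

theorem norm_tmul (htmul : ∀ u v ξ η, ⟪tmul u ξ, tmul v η⟫ = ⟪u, v⟫ * ⟪ξ, η⟫) (u : h) (ξ : H) :
    ‖tmul u ξ‖ = ‖u‖ * ‖ξ‖ := by
  have hsq : ‖tmul u ξ‖ ^ 2 = (‖u‖ * ‖ξ‖) ^ 2 := by
    have := htmul u u ξ ξ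
    simp only [inner_self_eq_norm_sq_to_K] at this
    rw [mul_pow]
    exact_mod_cast this
  exact (sq_eq_sq₀ (norm_nonneg _) (by positivity)).1 hsq

theorem norm_slice_apply_le (htmul : ∀ u v ξ η, ⟪tmul u ξ, tmul v η⟫ = ⟪u, v⟫ * ⟪ξ, η⟫)
    {A : HT → HT} {u v : h} {B : H → H}
    (hB : ∀ ξ₁ ξ₂, ⟪ξ₁, B ξ₂⟫ = ⟪tmul u ξ₁, A (tmul v ξ₂)⟫) (ξ : H) :
    ‖B ξ‖ ≤ ‖u‖ * ‖A (tmul v ξ)‖ := by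
  have hcs : ‖B ξ‖ ^ 2 ≤ ‖B ξ‖ * (‖u‖ * ‖A (tmul v ξ)‖) := calc
    ‖B ξ‖ ^ 2 = ‖⟪tmul u (B ξ), A (tmul v ξ)⟫‖ := by
      rw [← hB, inner_self_eq_norm_sq_to_K, norm_pow, RCLike.norm_ofReal, abs_norm]
    _ ≤ ‖tmul u (B ξ)‖ * ‖A (tmul v ξ)‖ := norm_inner_le_norm _ _
    _ = ‖B ξ‖ * (‖u‖ * ‖A (tmul v ξ)‖) := by rw [norm_tmul htmul]; ring
  rcases (norm_nonneg (B ξ)).eq_or_lt with h0 | h0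
  · rw [← h0]; positivity
  · exact le_of_mul_le_mul_left (by rwa [← sq]) h0

end TensorSlice

theorem stmt_3_general
    {h H HT : Type*}
    [NormedAddCommGroup h] [InnerProductSpace ℂ h]
    [NormedAddCommGroup H] [InnerProductSpace ℂ H] [CompleteSpace H]
    [NormedAddCommGroup HT] [InnerProductSpace ℂ HT] [CompleteSpace HT]
    (tmul : h →ₗ[ℂ] H →ₗ[ℂ] HT)
    (htmul : ∀ (u v : h) (ξ η : H), ⟪tmul u ξ, tmul v η⟫ = ⟪u, v⟫ * ⟪ξ, η⟫)
    (A : HT →L[ℂ] HT) (u v : h)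
    (Auv : H →L[ℂ] H)
    (hAuv : ∀ ξ₁ ξ₂ : H, ⟪ξ₁, Auv ξ₂⟫ = ⟪tmul u ξ₁, A (tmul v ξ₂)⟫)
    (AAvv : H →L[ℂ] H)
    (hAAvv : ∀ ξ₁ ξ₂ : H, ⟪ξ₁, AAvv ξ₂⟫ = ⟪tmul v ξ₁, (adjoint A ∘L A) (tmul v ξ₂)⟫) :
    (adjoint Auv ∘L Auv).IsPositive ∧
      (((‖u‖ : ℂ) ^ 2) • AAvv - adjoint Auv ∘L Auv).IsPositive := by
  refine ⟨isPositive_adjoint_comp_self Auv,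
    (isPositive_iff_inner_nonneg_complex _).2 fun ξ => ?_⟩
  have hle : ‖Auv ξ‖ ≤ ‖u‖ * ‖A (tmul v ξ)‖ :=
    norm_slice_apply_le (tmul := (tmul · ·)) htmul hAuv ξ
  have hform : ⟪(((‖u‖ : ℂ) ^ 2) • AAvv - adjoint Auv ∘L Auv) ξ, ξ⟫ =
      (((‖u‖ * ‖A (tmul v ξ)‖) ^ 2 - ‖Auv ξ‖ ^ 2 : ℝ) : ℂ) := by
    rw [sub_apply, smul_apply, comp_apply, inner_sub_left, inner_smul_left, adjoint_inner_left,
      inner_slice_adjoint_comp_self_apply_self (tmul := (tmul · ·)) hAAvv,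
      inner_self_eq_norm_sq_to_K, RCLike.ofReal_eq_complex_ofReal, map_pow, Complex.conj_ofReal]
    push_cast
    ring
  rw [hform, Complex.zero_le_real, sub_nonneg]
  gcongr

/-- `0 ≤ A(u,v)* A(u,v) ≤ ‖u‖² (A*A)(v,v)` in `B(H)`. -/
theorem stmt_3
    {h H HT : Type*}
    [NormedAddCommGroup h] [InnerProductSpace ℂ h] [CompleteSpace h]
    [NormedAddCommGroup H] [InnerProductSpace ℂ H] [CompleteSpace H]
    [NormedAddCommGroup HT] [InnerProductSpace ℂ HT] [CompleteSpace HT]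
    (tmul : h →ₗ[ℂ] H →ₗ[ℂ] HT)
    (htmul : ∀ (u v : h) (ξ η : H), ⟪tmul u ξ, tmul v η⟫ = ⟪u, v⟫ * ⟪ξ, η⟫)
    (A : HT →L[ℂ] HT) (u v : h)
    (Auv : H →L[ℂ] H)
    (hAuv : ∀ ξ₁ ξ₂ : H, ⟪ξ₁, Auv ξ₂⟫ = ⟪tmul u ξ₁, A (tmul v ξ₂)⟫)
    (AAvv : H →L[ℂ] H)
    (hAAvv : ∀ ξ₁ ξ₂ : H, ⟪ξ₁, AAvv ξ₂⟫ = ⟪tmul v ξ₁, (adjoint A ∘L A) (tmul v ξ₂)⟫) :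
    (adjoint Auv ∘L Auv).IsPositive ∧
      (((‖u‖ : ℂ) ^ 2) • AAvv - adjoint Auv ∘L Auv).IsPositive :=
  stmt_3_general tmul htmul A u v Auv hAuv AAvv hAAvv
end

section
/- Let U be a unitary on h ⊗ H, Ω ∈ H a unit vector, {e_m} an orthonormal basis of h, and T ∈ B(h) the vacuum expectation of U given by ⟨u, Tv⟩ = ⟨u⊗Ω, U(v⊗Ω)⟩. Then for every v ∈ h: Σ_{m≥1} ‖(U − 1)(e_m, v) Ω‖² = 2 Re ⟨v, (1 − T) v⟩ ≤ 2 ‖v‖ · ‖(T − 1)v‖, where (U−1)(e_m,v) denotes the partial matrix element operator. -/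
open ContinuousLinearMap

local notation "⟪" x ", " y "⟫" => @inner ℂ _ _ x y

/-!
With `x = (U - 1)(v ⊗ Ω)`, the vector `(U - 1)(e_m, v) Ω` is the slice `(e_m ⊗ 1)* x`, whose
coordinates in a Hilbert basis `(f_k)` of `H` are those of `x` along `e_m ⊗ f_k`. Since the
`e_m ⊗ f_k` form a Hilbert basis of `h ⊗ H`, Parseval gives `Σ_m ‖(U - 1)(e_m, v) Ω‖² = ‖x‖²`, and
as `U` is isometric and `‖Ω‖ = 1`, `‖x‖² = 2‖v‖² - 2 Re ⟨v ⊗ Ω, U (v ⊗ Ω)⟩ = 2 Re ⟨v, (1 - T) v⟩`.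
The inequality is Cauchy–Schwarz.
-/

open scoped InnerProductSpace

open Submodule in
theorem ContinuousLinearMap.apply_mem_of_dense_span {𝕜 E F : Type*} [RCLike 𝕜]
    [NormedAddCommGroup E] [NormedSpace 𝕜 E] [NormedAddCommGroup F] [NormedSpace 𝕜 F]
    {L : E →L[𝕜] F} {K : Submodule 𝕜 F} (hK : IsClosed (K : Set F)) {s : Set E}
    (hs : (span 𝕜 s).topologicalClosure = ⊤) (hL : ∀ x ∈ s, L x ∈ K) (x : E) : L x ∈ K := by
  have hspan : span 𝕜 s ≤ K.comap (L : E →ₗ[𝕜] F) := span_le.2 hL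
  have hclosure := topologicalClosure_minimal _ hspan (hK.preimage L.continuous)
  exact hclosure (hs ▸ mem_top)

theorem HilbertBasis.hasSum_norm_sq_inner {ι 𝕜 E : Type*} [RCLike 𝕜] [NormedAddCommGroup E]
    [InnerProductSpace 𝕜 E] (b : HilbertBasis ι 𝕜 E) (x : E) :
    HasSum (fun i => ‖⟪b i, x⟫_𝕜‖ ^ 2) (‖x‖ ^ 2) := by
  have h := lp.hasSum_norm (p := 2) (by norm_num) (b.repr x)
  simpa [b.repr_apply_apply] using h

theorem norm_sub_sq_eq_two_mul_re_inner_of_norm_eq {𝕜 E : Type*} [RCLike 𝕜]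
    [NormedAddCommGroup E] [InnerProductSpace 𝕜 E] {a z : E} (h : ‖a‖ = ‖z‖) :
    ‖a - z‖ ^ 2 = 2 * RCLike.re ⟪z, z - a⟫_𝕜 := by
  rw [@norm_sub_sq 𝕜, inner_sub_right, map_sub, inner_self_eq_norm_sq, inner_re_symm, h]
  ring

section TensorPairing

variable {𝕜 E F G : Type*} [RCLike 𝕜]
  [NormedAddCommGroup E] [InnerProductSpace 𝕜 E]
  [NormedAddCommGroup F] [InnerProductSpace 𝕜 F]
  [NormedAddCommGroup G] [InnerProductSpace 𝕜 G]

/-- `B` realises `u ⊗ ξ ↦ B u ξ` as an embedding of the algebraic tensor product `E ⊗ F` into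
`G`, compatible with the inner products. -/
def IsTensorPairing (B : E →ₗ[𝕜] F →ₗ[𝕜] G) : Prop :=
  ∀ (u v : E) (ξ η : F), ⟪B u ξ, B v η⟫_𝕜 = ⟪u, v⟫_𝕜 * ⟪ξ, η⟫_𝕜

namespace IsTensorPairing

variable {B : E →ₗ[𝕜] F →ₗ[𝕜] G}

theorem norm_apply (hB : IsTensorPairing B) (u : E) (ξ : F) : ‖B u ξ‖ = ‖u‖ * ‖ξ‖ := by
  have h := hB u u ξ ξ
  rw [inner_self_eq_norm_sq_to_K, inner_self_eq_norm_sq_to_K, inner_self_eq_norm_sq_to_K] at h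
  have hsq : ‖B u ξ‖ ^ 2 = (‖u‖ * ‖ξ‖) ^ 2 := by rw [mul_pow]; exact_mod_cast h
  exact (sq_eq_sq₀ (norm_nonneg _) (by positivity)).1 hsq

noncomputable def toCLM (hB : IsTensorPairing B) : E →L[𝕜] F →L[𝕜] G :=
  LinearMap.mkContinuous₂ B 1 fun u ξ => by rw [one_mul, hB.norm_apply]

theorem orthonormal (hB : IsTensorPairing B) {ι κ : Type*} {e : ι → E} {f : κ → F}
    (he : Orthonormal 𝕜 e) (hf : Orthonormal 𝕜 f) :
    Orthonormal 𝕜 fun p : ι × κ => B (e p.1) (f p.2) := by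
  classical
  rw [orthonormal_iff_ite]
  rintro ⟨i, k⟩ ⟨j, l⟩
  rw [hB, orthonormal_iff_ite.1 he, orthonormal_iff_ite.1 hf]
  by_cases hij : i = j <;> by_cases hkl : k = l <;> simp [hij, hkl]

theorem topologicalClosure_span_eq_top (hB : IsTensorPairing B)
    (htotal : (Submodule.span 𝕜 {x : G | ∃ (u : E) (ξ : F), x = B u ξ}).topologicalClosure = ⊤)
    {ι κ : Type*} (e : HilbertBasis ι 𝕜 E) (f : HilbertBasis κ 𝕜 F) :
    (Submodule.span 𝕜 (Set.range fun p : ι × κ => B (e p.1) (f p.2))).topologicalClosure = ⊤ := by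
  set S := (Submodule.span 𝕜 (Set.range fun p : ι × κ => B (e p.1) (f p.2))).topologicalClosure
  have hS : IsClosed (S : Set G) := Submodule.isClosed_topologicalClosure _
  have hbasis_left (i : ι) (ξ : F) : B (e i) ξ ∈ S := by
    refine (hB.toCLM (e i)).apply_mem_of_dense_span hS f.dense_span ?_ ξ
    rintro _ ⟨k, rfl⟩
    exact Submodule.le_topologicalClosure _ (Submodule.subset_span ⟨(i, k), rfl⟩)
  have hall (u : E) (ξ : F) : B u ξ ∈ S := by
    refine (hB.toCLM.flip ξ).apply_mem_of_dense_span hS e.dense_span ?_ u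
    rintro _ ⟨i, rfl⟩
    exact hbasis_left i ξ
  rw [eq_top_iff, ← htotal]
  refine Submodule.topologicalClosure_minimal _ (Submodule.span_le.2 ?_) hS
  rintro _ ⟨u, ξ, rfl⟩
  exact hall u ξ

noncomputable def hilbertBasis [CompleteSpace G] (hB : IsTensorPairing B)
    (htotal : (Submodule.span 𝕜 {x : G | ∃ (u : E) (ξ : F), x = B u ξ}).topologicalClosure = ⊤)
    {ι κ : Type*} (e : HilbertBasis ι 𝕜 E) (f : HilbertBasis κ 𝕜 F) :
    HilbertBasis (ι × κ) 𝕜 G :=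
  HilbertBasis.mk (hB.orthonormal e.orthonormal f.orthonormal)
    (hB.topologicalClosure_span_eq_top htotal e f).ge

theorem coe_hilbertBasis [CompleteSpace G] (hB : IsTensorPairing B)
    (htotal : (Submodule.span 𝕜 {x : G | ∃ (u : E) (ξ : F), x = B u ξ}).topologicalClosure = ⊤)
    {ι κ : Type*} (e : HilbertBasis ι 𝕜 E) (f : HilbertBasis κ 𝕜 F) :
    ⇑(hB.hilbertBasis htotal e f) = fun p : ι × κ => B (e p.1) (f p.2) :=
  HilbertBasis.coe_mk _ _

/-- Parseval for the slices `y i = (e i ⊗ 1)* x` of a vector `x` of `G`. -/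
theorem hasSum_norm_sq_of_inner_eq [CompleteSpace F] [CompleteSpace G] (hB : IsTensorPairing B)
    (htotal : (Submodule.span 𝕜 {x : G | ∃ (u : E) (ξ : F), x = B u ξ}).topologicalClosure = ⊤)
    {ι : Type*} (e : HilbertBasis ι 𝕜 E) (x : G) (y : ι → F)
    (hy : ∀ (i : ι) (ξ : F), ⟪ξ, y i⟫_𝕜 = ⟪B (e i) ξ, x⟫_𝕜) :
    HasSum (fun i => ‖y i‖ ^ 2) (‖x‖ ^ 2) := by
  obtain ⟨s, f, -⟩ := exists_hilbertBasis 𝕜 F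
  have hslice (i : ι) : HasSum (fun k => ‖⟪B (e i) (f k), x⟫_𝕜‖ ^ 2) (‖y i‖ ^ 2) := by
    simpa only [hy] using f.hasSum_norm_sq_inner (y i)
  have hparseval := (hB.hilbertBasis htotal e f).hasSum_norm_sq_inner x
  rw [coe_hilbertBasis] at hparseval
  exact hparseval.prod_fiberwise hslice

end IsTensorPairing

end TensorPairing

theorem stmt_7_general
    {h H HT : Type*}
    [NormedAddCommGroup h] [InnerProductSpace ℂ h]
    [NormedAddCommGroup H] [InnerProductSpace ℂ H] [CompleteSpace H]
    [NormedAddCommGroup HT] [InnerProductSpace ℂ HT] [CompleteSpace HT]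
    (tmul : h →ₗ[ℂ] H →ₗ[ℂ] HT)
    (htmul : ∀ (u v : h) (ξ η : H), ⟪tmul u ξ, tmul v η⟫ = ⟪u, v⟫ * ⟪ξ, η⟫)
    (htotal : (Submodule.span ℂ {x : HT | ∃ (w : h) (ξ : H), x = tmul w ξ}).topologicalClosure = ⊤)
    (U : HT →L[ℂ] HT) (hU : U ∈ unitary (HT →L[ℂ] HT))
    (Ω : H) (hΩ : ‖Ω‖ = 1)
    (e : HilbertBasis ℕ ℂ h)
    (T : h →L[ℂ] h)
    (hT : ∀ u v : h, ⟪u, T v⟫ = ⟪tmul u Ω, U (tmul v Ω)⟫)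
    (v : h)
    -- the partial matrix element operators `(U − 1)(e_m, v)`
    (W : ℕ → (H →L[ℂ] H))
    (hW : ∀ (m : ℕ) (ξ₁ ξ₂ : H),
      ⟪ξ₁, W m ξ₂⟫ = ⟪tmul (e m) ξ₁, U (tmul v ξ₂) - tmul v ξ₂⟫) :
    HasSum (fun m => ‖W m Ω‖ ^ 2) (2 * (⟪v, v - T v⟫).re) ∧
      2 * (⟪v, v - T v⟫).re ≤ 2 * ‖v‖ * ‖T v - v‖ := by
  have hB : IsTensorPairing tmul := htmul
  have hparseval := hB.hasSum_norm_sq_of_inner_eq htotal e (U (tmul v Ω) - tmul v Ω)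
    (fun m => W m Ω) fun m ξ => hW m ξ Ω
  have hnorm : ‖U (tmul v Ω) - tmul v Ω‖ ^ 2 = 2 * (⟪v, v - T v⟫).re := by
    rw [norm_sub_sq_eq_two_mul_re_inner_of_norm_eq (𝕜 := ℂ) (norm_map_of_mem_unitary hU _),
      inner_sub_right, inner_sub_right, ← hT, htmul, inner_self_eq_norm_sq_to_K Ω, hΩ]
    simp
  refine ⟨hnorm ▸ hparseval, ?_⟩
  rw [mul_assoc, norm_sub_rev]
  exact mul_le_mul_of_nonneg_left (re_inner_le_norm (𝕜 := ℂ) v (v - T v)) zero_le_two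

/-- `Σ_m ‖(U − 1)(e_m, v) Ω‖² = 2 Re ⟨v, (1 − T) v⟩ ≤ 2 ‖v‖ ‖(T − 1)v‖`. -/
theorem stmt_7
    {h H HT : Type*}
    [NormedAddCommGroup h] [InnerProductSpace ℂ h] [CompleteSpace h]
    [NormedAddCommGroup H] [InnerProductSpace ℂ H] [CompleteSpace H]
    [NormedAddCommGroup HT] [InnerProductSpace ℂ HT] [CompleteSpace HT]
    (tmul : h →ₗ[ℂ] H →ₗ[ℂ] HT)
    (htmul : ∀ (u v : h) (ξ η : H), ⟪tmul u ξ, tmul v η⟫ = ⟪u, v⟫ * ⟪ξ, η⟫)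
    (htotal : (Submodule.span ℂ {x : HT | ∃ (w : h) (ξ : H), x = tmul w ξ}).topologicalClosure = ⊤)
    (U : HT →L[ℂ] HT) (hU : U ∈ unitary (HT →L[ℂ] HT))
    (Ω : H) (hΩ : ‖Ω‖ = 1)
    (e : HilbertBasis ℕ ℂ h)
    (T : h →L[ℂ] h)
    (hT : ∀ u v : h, ⟪u, T v⟫ = ⟪tmul u Ω, U (tmul v Ω)⟫)
    (v : h)
    -- the partial matrix element operators `(U − 1)(e_m, v)`
    (W : ℕ → (H →L[ℂ] H))
    (hW : ∀ (m : ℕ) (ξ₁ ξ₂ : H),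
      ⟪ξ₁, W m ξ₂⟫ = ⟪tmul (e m) ξ₁, U (tmul v ξ₂) - tmul v ξ₂⟫) :
    HasSum (fun m => ‖W m Ω‖ ^ 2) (2 * (⟪v, v - T v⟫).re) ∧
      2 * (⟪v, v - T v⟫).re ≤ 2 * ‖v‖ * ‖T v - v‖ :=
  stmt_7_general tmul htmul htotal U hU Ω hΩ e T hT v W hW
end

section
/- Let G be the generator of a C₀-contraction semigroup on h, with domain D(G), and let A be a positive self-adjoint operator with D(G) ⊆ D(A) such that ⟨v, A v⟩ = −2 Re ⟨v, G v⟩ for all v ∈ D(G). Suppose L : D(G) → h ⊗ k is a linear operator satisfying ‖L v‖² = ⟨v, A v⟩ for all v ∈ D(G). Then L is closable. -/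
/-!
Polarizing `‖L v‖² = ⟪v, A v⟫`, whose right-hand side is real because it equals
`-2 Re ⟪v, G v⟫`, gives `⟪L x, L y⟫ = ⟪x, A y⟫` on `D(G)`. If `(0, w)` lies in the closure of
the graph of `L`, passing to the limit in this identity gives `⟪w, L u⟫ = 0` for every `u`, so
`w` lies both in the closure of the range of `L` and in its orthogonal complement; hence `w = 0`.
-/

open Filter
open scoped NNReal InnerProductSpace

local notation "⟪" x ", " y "⟫" => @inner ℂ _ _ x y

theorem LinearMap.sesqForm_eq_zero_of_apply_self_eq_zero {M : Type*} [AddCommGroup M]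
    [Module ℂ M] (B : M →ₗ⋆[ℂ] M →ₗ[ℂ] ℂ) (hB : ∀ x, B x x = 0) : B = 0 := by
  ext x y
  have h₁ := hB (x + y)
  have h₂ := hB (x + Complex.I • y)
  simp only [map_add, map_smulₛₗ, LinearMap.add_apply, LinearMap.smul_apply, smul_eq_mul,
    Complex.conj_I, hB, RingHom.id_apply] at h₁ h₂
  rw [LinearMap.zero_apply, LinearMap.zero_apply]
  linear_combination (h₁ - Complex.I * h₂) / 2 + (B x y - B y x) / 2 * Complex.I_sq

theorem inner_eq_inner_of_forall_inner_self_eq {M E F : Type*} [AddCommGroup M] [Module ℂ M]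
    [SeminormedAddCommGroup E] [InnerProductSpace ℂ E]
    [SeminormedAddCommGroup F] [InnerProductSpace ℂ F]
    (f : M →ₗ[ℂ] F) (g k : M →ₗ[ℂ] E) (h : ∀ v, ⟪f v, f v⟫ = ⟪g v, k v⟫) (x y : M) :
    ⟪f x, f y⟫ = ⟪g x, k y⟫ := by
  have hB := LinearMap.sesqForm_eq_zero_of_apply_self_eq_zero
    (((innerₛₗ ℂ).comp f).compl₂ f - ((innerₛₗ ℂ).comp g).compl₂ k) fun v => by
      simp only [LinearMap.sub_apply, LinearMap.compl₂_apply, LinearMap.comp_apply,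
        innerₛₗ_apply_apply, h, sub_self]
  simpa [sub_eq_zero] using LinearMap.congr_fun₂ hB x y

theorem LinearPMap.isClosable_of_inner_map_map_eq {𝕜 E F : Type*} [RCLike 𝕜]
    [NormedAddCommGroup E] [InnerProductSpace 𝕜 E] [NormedAddCommGroup F] [InnerProductSpace 𝕜 F]
    {L : E →ₗ.[𝕜] F} (S : L.domain → E) (hS : ∀ x y : L.domain, ⟪L x, L y⟫_𝕜 = ⟪(x : E), S y⟫_𝕜) :
    L.IsClosable := by
  refine ⟨L.graph.topologicalClosure.toLinearPMap, (Submodule.toLinearPMap_graph_eq _ ?_).symm⟩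
  rintro ⟨x, w⟩ hxw (rfl : x = 0)
  have hgraph : _root_.closure (L.graph : Set (E × F)) ⊆
      {p | ∀ u : L.domain, ⟪p.2, L u⟫_𝕜 = ⟪p.1, S u⟫_𝕜} := by
    refine closure_minimal ?_ ?_
    · rintro ⟨_, _⟩ hp u
      obtain ⟨v, rfl, rfl⟩ := L.mem_graph_iff.mp hp
      exact hS v u
    · simp only [Set.ofPred_forall]
      exact isClosed_iInter fun u => isClosed_eq (by fun_prop) (by fun_prop)
  have hw : w ∈ _root_.closure (Set.range L) := by
    refine map_mem_closure continuous_snd hxw ?_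
    rintro ⟨_, _⟩ hp
    obtain ⟨v, rfl, rfl⟩ := L.mem_graph_iff.mp hp
    exact ⟨v, rfl⟩
  have hrange : _root_.closure (Set.range L) ⊆ {y | ⟪y, w⟫_𝕜 = 0} := by
    refine closure_minimal ?_ (isClosed_eq (by fun_prop) (by fun_prop))
    rintro _ ⟨u, rfl⟩
    exact inner_eq_zero_symm.mp ((hgraph hxw u).trans (inner_zero_left _))
  exact inner_self_eq_zero.mp (hrange hw)

theorem stmt_11_general
    {h K : Type*}
    [NormedAddCommGroup h] [InnerProductSpace ℂ h]
    [NormedAddCommGroup K] [InnerProductSpace ℂ K]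
    (G : h →ₗ.[ℂ] h)
    -- `A` positive and self-adjoint with `D(G) ⊆ D(A)`
    (A : h →ₗ.[ℂ] h)
    (hGA : G.domain ≤ A.domain)
    (hform : ∀ v : G.domain,
      ⟪(v : h), A ⟨(v : h), hGA v.2⟩⟫ = ((-2 * (⟪(v : h), G v⟫).re : ℝ) : ℂ))
    -- `L` with domain `D(G)` and `‖L v‖² = ⟨v, A v⟩`
    (L : h →ₗ.[ℂ] K)
    (hLdom : L.domain = G.domain)
    (hLnorm : ∀ (v : h) (hv : v ∈ L.domain) (hv' : v ∈ A.domain),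
      (‖L ⟨v, hv⟩‖ ^ 2 : ℝ) = (⟪v, A ⟨v, hv'⟩⟫).re) :
    L.IsClosable := by
  have hLA : L.domain ≤ A.domain := hLdom.le.trans hGA
  let A' : L.domain →ₗ[ℂ] h := A.toFun ∘ₗ Submodule.inclusion hLA
  have hdiag : ∀ v : L.domain, ⟪L v, L v⟫ = ⟪(v : h), A' v⟫ := by
    rintro ⟨v, hv⟩
    have him : (⟪v, A ⟨v, hLA hv⟩⟫).im = 0 := by
      simpa using congrArg Complex.im (hform ⟨v, hLdom ▸ hv⟩)
    exact Complex.ext ((inner_self_eq_norm_sq (𝕜 := ℂ) _).trans (hLnorm v hv (hLA hv)))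
      ((inner_self_im (𝕜 := ℂ) _).trans him.symm)
  exact L.isClosable_of_inner_map_map_eq A'
    (inner_eq_inner_of_forall_inner_self_eq L.toFun L.domain.subtype A' hdiag)

/-- If `G` generates a `C₀`-contraction semigroup, `A` is a positive self-adjoint
operator with `D(G) ⊆ D(A)` and `⟨v, A v⟩ = −2 Re ⟨v, G v⟩` on `D(G)`, and
`L : D(G) → h ⊗ k` satisfies `‖L v‖² = ⟨v, A v⟩`, then `L` is closable. -/
theorem stmt_11
    {h K : Type*}
    [NormedAddCommGroup h] [InnerProductSpace ℂ h] [CompleteSpace h]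
    [NormedAddCommGroup K] [InnerProductSpace ℂ K] [CompleteSpace K]
    (G : h →ₗ.[ℂ] h)
    -- `G` generates the `C₀`-contraction semigroup `T`
    (T : ℝ≥0 → (h →L[ℂ] h))
    (hT0 : T 0 = 1)
    (hTsemi : ∀ s t : ℝ≥0, T (s + t) = T s ∘L T t)
    (hTcontr : ∀ t, ‖T t‖ ≤ 1)
    (hTcont : ∀ v : h, Continuous fun t : ℝ≥0 => T t v)
    (hGen : ∀ v : G.domain,
      Tendsto (fun t : ℝ≥0 => (((t : ℝ) : ℂ))⁻¹ • (T t (v : h) - (v : h)))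
        (nhdsWithin 0 (Set.Ioi 0)) (nhds (G v)))
    -- `A` positive and self-adjoint with `D(G) ⊆ D(A)`
    (A : h →ₗ.[ℂ] h)
    (hAself : A.adjoint = A)
    (hApos : ∀ x : A.domain, 0 ≤ (⟪(x : h), A x⟫).re)
    (hGA : G.domain ≤ A.domain)
    (hform : ∀ v : G.domain,
      ⟪(v : h), A ⟨(v : h), hGA v.2⟩⟫ = ((-2 * (⟪(v : h), G v⟫).re : ℝ) : ℂ))
    -- `L` with domain `D(G)` and `‖L v‖² = ⟨v, A v⟩`
    (L : h →ₗ.[ℂ] K)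
    (hLdom : L.domain = G.domain)
    (hLnorm : ∀ (v : h) (hv : v ∈ L.domain) (hv' : v ∈ A.domain),
      (‖L ⟨v, hv⟩‖ ^ 2 : ℝ) = (⟪v, A ⟨v, hv'⟩⟫).re) :
    L.IsClosable :=
  stmt_11_general G A hGA hform L hLdom hLnorm
end

section
/- Let G generate a C₀-contraction semigroup on h with resolvent (n − G)^{-1} for n ≥ 1. Define G(n) = n² (n − G*)^{-1} G (n − G)^{-1} and, for operators L_j with Σ_j ‖L_j v‖² = −2 Re⟨v, Gv⟩ on D(G), define L_j(n) = n L_j (n − G)^{-1}. Then G(n), L_j(n) are bounded and for every v ∈ h: Σ_j ‖L_j(n) v‖² = −2 Re ⟨v, G(n) v⟩. -/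
local notation "⟪" x ", " y "⟫" => @inner ℂ _ _ x y

/-!
Write `w = (n − G)⁻¹ v ∈ D(G)`. Since `(n − G*)⁻¹` is the adjoint of `(n − G)⁻¹`, we get
`⟨v, (n − G*)⁻¹ G w⟩ = ⟨w, G w⟩`, so the identity for `L_j(n)` is `n²` times the identity
for `L_j` at `w`. That adjointness needs `D(G)` to be dense, which follows from dissipativity:
if `u ⊥ D(G)` and `x = (n − G)⁻¹ u`, then `Re⟨x, G x⟩ = n ‖x‖²`, forcing `x = 0` and so `u = 0`.
The bound on `L_j(n)` then comes from the identity itself: each term of the sum is at most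
`2 ‖v‖ ‖G(n) v‖`.
-/

namespace LinearPMap

variable {h : Type*} [NormedAddCommGroup h] [InnerProductSpace ℂ h]

def IsDissipative (G : h →ₗ.[ℂ] h) : Prop :=
  ∀ w : G.domain, (⟪(w : h), G w⟫).re ≤ 0

theorem isDissipative_of_hasSum {ι : Type*} {G : h →ₗ.[ℂ] h} (L : ι → G.domain → h)
    (hsum : ∀ w : G.domain, HasSum (fun j => ‖L j w‖ ^ 2) (-2 * (⟪(w : h), G w⟫).re)) :
    G.IsDissipative := fun w => by
  linarith [(hsum w).nonneg fun j => sq_nonneg ‖L j w‖]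

theorem apply_resolvent_eq {G : h →ₗ.[ℂ] h} {c : ℂ} {R : h → h}
    (hmem : ∀ v, R v ∈ G.domain) (hres : ∀ v, c • R v - G ⟨R v, hmem v⟩ = v) (v : h) :
    G ⟨R v, hmem v⟩ = c • R v - v := by
  rw [sub_eq_iff_eq_add.mp (hres v), add_sub_cancel_left]

theorem norm_apply_resolvent_le {G : h →ₗ.[ℂ] h} {c : ℂ} {R : h → h}
    (hmem : ∀ v, R v ∈ G.domain) (hres : ∀ v, c • R v - G ⟨R v, hmem v⟩ = v) {v : h}
    (hcontr : ‖c • R v‖ ≤ ‖v‖) :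
    ‖G ⟨R v, hmem v⟩‖ ≤ 2 * ‖v‖ := by
  rw [apply_resolvent_eq hmem hres]
  linarith [norm_sub_le (c • R v) v]

theorem IsDissipative.dense_domain [CompleteSpace h] {G : h →ₗ.[ℂ] h} (hG : G.IsDissipative)
    {r : ℝ} (hr : 0 < r) {R : h → h} (hmem : ∀ v, R v ∈ G.domain)
    (hres : ∀ v, (r : ℂ) • R v - G ⟨R v, hmem v⟩ = v) :
    Dense (G.domain : Set h) := by
  rw [Submodule.dense_iff_topologicalClosure_eq_top, Submodule.topologicalClosure_eq_top_iff,
    Submodule.eq_bot_iff]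
  intro u hu
  have horth : ⟪R u, u⟫ = 0 := Submodule.inner_right_of_mem_orthogonal (hmem u) hu
  have hre : (⟪R u, G ⟨R u, hmem u⟩⟫).re = r * ‖R u‖ ^ 2 := by
    rw [apply_resolvent_eq hmem hres, inner_sub_right, horth, sub_zero, inner_smul_right,
      Complex.re_ofReal_mul, ← RCLike.re_to_complex, inner_self_eq_norm_sq]
  have hRu : R u = 0 := by
    have hdiss : (⟪R u, G ⟨R u, hmem u⟩⟫).re ≤ 0 := hG ⟨R u, hmem u⟩
    have hsq : ‖R u‖ ^ 2 ≤ 0 := nonpos_of_mul_nonpos_right (hre ▸ hdiss) hr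
    exact norm_eq_zero.mp (pow_eq_zero_iff two_ne_zero |>.mp (le_antisymm hsq (sq_nonneg _)))
  have hzero : (⟨R u, hmem u⟩ : G.domain) = 0 := Subtype.ext hRu
  rw [← hres u, hzero, map_zero, sub_zero, hRu, smul_zero]

theorem inner_resolvent_adjoint [CompleteSpace h] {G : h →ₗ.[ℂ] h}
    (hdense : Dense (G.domain : Set h)) {c : ℂ}
    {R : h → h} (hmem : ∀ v, R v ∈ G.domain) (hres : ∀ v, c • R v - G ⟨R v, hmem v⟩ = v)
    {R' : h → h} (hmem' : ∀ v, R' v ∈ G†.domain)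
    (hres' : ∀ v, starRingEnd ℂ c • R' v - G† ⟨R' v, hmem' v⟩ = v) (v u : h) :
    ⟪v, R' u⟫ = ⟪R v, u⟫ := by
  have hadj : ⟪G ⟨R v, hmem v⟩, R' u⟫ = ⟪R v, G† ⟨R' u, hmem' u⟩⟫ :=
    (adjoint_isFormalAdjoint hdense).symm ⟨R v, hmem v⟩ ⟨R' u, hmem' u⟩
  conv_lhs => rw [← hres v]
  conv_rhs => rw [← hres' u]
  rw [inner_sub_left, inner_sub_right, inner_smul_left, inner_smul_right, hadj]

end LinearPMap

theorem HasSum.norm_smul_sq {ι E : Type*} [SeminormedAddCommGroup E] [NormedSpace ℂ E]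
    {f : ι → E} {a : ℝ} (hf : HasSum (fun j => ‖f j‖ ^ 2) a) (c : ℂ) :
    HasSum (fun j => ‖c • f j‖ ^ 2) (‖c‖ ^ 2 * a) := by
  simpa only [norm_smul, mul_pow] using hf.mul_left (‖c‖ ^ 2)

theorem norm_le_of_hasSum_sq_eq_neg_two_re_inner {ι E : Type*} [NormedAddCommGroup E]
    {h : Type*} [NormedAddCommGroup h] [InnerProductSpace ℂ h] {f : ι → E} {v x : h} {C : ℝ}
    (hsum : HasSum (fun j => ‖f j‖ ^ 2) (-2 * (⟪v, x⟫).re)) (hx : ‖x‖ ≤ C * ‖v‖) (j : ι) :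
    ‖f j‖ ≤ Real.sqrt (2 * C) * ‖v‖ := by
  have hterm : ‖f j‖ ^ 2 ≤ -2 * (⟪v, x⟫).re := le_hasSum hsum j fun i _ => sq_nonneg ‖f i‖
  have hre : -(⟪v, x⟫).re ≤ ‖v‖ * ‖x‖ :=
    (neg_le_abs _).trans ((Complex.abs_re_le_norm _).trans (norm_inner_le_norm v x))
  have hsq : ‖f j‖ ^ 2 ≤ 2 * C * ‖v‖ ^ 2 := by
    nlinarith [mul_le_mul_of_nonneg_left hx (norm_nonneg v)]
  calc ‖f j‖ = |‖f j‖| := (abs_norm _).symm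
    _ ≤ Real.sqrt (2 * C * ‖v‖ ^ 2) := Real.abs_le_sqrt hsq
    _ = Real.sqrt (2 * C) * ‖v‖ := by
      rw [Real.sqrt_mul' _ (sq_nonneg _), Real.sqrt_sq (norm_nonneg v)]

/-- With `G(n) = n² (n − G*)⁻¹ G (n − G)⁻¹` and `L_j(n) = n L_j (n − G)⁻¹`, the
operators `G(n)` and `L_j(n)` are bounded and `Σ_j ‖L_j(n) v‖² = −2 Re⟨v, G(n) v⟩`
for every `v ∈ h`. -/
theorem stmt_13
    {h : Type*}
    [NormedAddCommGroup h] [InnerProductSpace ℂ h] [CompleteSpace h]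
    (G : h →ₗ.[ℂ] h)
    (n : ℕ) (hn : 1 ≤ n)
    -- the resolvent `Rn = (n − G)⁻¹` and `Rn' = (n − G*)⁻¹`
    (Rn : h →L[ℂ] h) (hmem : ∀ v : h, Rn v ∈ G.domain)
    (hres : ∀ v : h, (n : ℂ) • Rn v - G ⟨Rn v, hmem v⟩ = v)
    (hcontr : ∀ v : h, ‖(n : ℂ) • Rn v‖ ≤ ‖v‖)
    (Rn' : h →L[ℂ] h) (hmem' : ∀ v : h, Rn' v ∈ G.adjoint.domain)
    (hres' : ∀ v : h, (n : ℂ) • Rn' v - G.adjoint ⟨Rn' v, hmem' v⟩ = v)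
    (hcontr' : ∀ v : h, ‖(n : ℂ) • Rn' v‖ ≤ ‖v‖)
    -- the operators `L_j` on `D(G)` with `Σ_j ‖L_j w‖² = −2 Re⟨w, G w⟩`
    (L : ℕ → (G.domain →ₗ[ℂ] h))
    (hsum : ∀ w : G.domain, HasSum (fun j => ‖L j w‖ ^ 2) (-2 * (⟪(w : h), G w⟫).re)) :
    (∃ C : ℝ, ∀ v : h, ‖((n : ℂ) ^ 2) • Rn' (G ⟨Rn v, hmem v⟩)‖ ≤ C * ‖v‖) ∧
      (∀ j : ℕ, ∃ C : ℝ, ∀ v : h, ‖(n : ℂ) • L j ⟨Rn v, hmem v⟩‖ ≤ C * ‖v‖) ∧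
      ∀ v : h,
        HasSum (fun j => ‖(n : ℂ) • L j ⟨Rn v, hmem v⟩‖ ^ 2)
          (-2 * (⟪v, ((n : ℂ) ^ 2) • Rn' (G ⟨Rn v, hmem v⟩)⟫).re) := by
  have hnpos : (0 : ℝ) < n := by exact_mod_cast hn
  have hdense : Dense (G.domain : Set h) :=
    (LinearPMap.isDissipative_of_hasSum (fun j w => L j w) hsum).dense_domain hnpos hmem
      (by exact_mod_cast hres)
  have hkey : ∀ v, ⟪v, Rn' (G ⟨Rn v, hmem v⟩)⟫ = ⟪Rn v, G ⟨Rn v, hmem v⟩⟫ := fun v =>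
    LinearPMap.inner_resolvent_adjoint hdense hmem hres hmem'
      (by simpa only [Complex.conj_natCast] using hres') v _
  have hbound : ∀ v, ‖((n : ℂ) ^ 2) • Rn' (G ⟨Rn v, hmem v⟩)‖ ≤ 2 * n * ‖v‖ := fun v =>
    calc ‖((n : ℂ) ^ 2) • Rn' (G ⟨Rn v, hmem v⟩)‖
        = n * ‖(n : ℂ) • Rn' (G ⟨Rn v, hmem v⟩)‖ := by
          rw [pow_two, mul_smul, norm_smul, Complex.norm_natCast]
      _ ≤ n * (2 * ‖v‖) := mul_le_mul_of_nonneg_left ((hcontr' _).trans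
          (LinearPMap.norm_apply_resolvent_le hmem hres (hcontr v))) hnpos.le
      _ = 2 * n * ‖v‖ := by ring
  have hsumn : ∀ v, HasSum (fun j => ‖(n : ℂ) • L j ⟨Rn v, hmem v⟩‖ ^ 2)
      (-2 * (⟪v, ((n : ℂ) ^ 2) • Rn' (G ⟨Rn v, hmem v⟩)⟫).re) := fun v => by
    have hvalue : -2 * (⟪v, ((n : ℂ) ^ 2) • Rn' (G ⟨Rn v, hmem v⟩)⟫).re
        = ‖(n : ℂ)‖ ^ 2 * (-2 * (⟪Rn v, G ⟨Rn v, hmem v⟩⟫).re) := by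
      rw [inner_smul_right, hkey, Complex.norm_natCast, ← Complex.ofReal_natCast,
        ← Complex.ofReal_pow, Complex.re_ofReal_mul]
      ring
    exact hvalue ▸ (hsum ⟨Rn v, hmem v⟩).norm_smul_sq (n : ℂ)
  exact ⟨⟨_, hbound⟩, fun j => ⟨_, fun v => norm_le_of_hasSum_sq_eq_neg_two_re_inner
    (hsumn v) (hbound v) j⟩, hsumn⟩
end
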